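/- arXiv:1912.07968 — 5 statements merged into one kernel-verified Lean document; each statement's English description precedes it below -/
import Mathlib

section
/- Let x and y be vectors in ℝ^d and let A be a doubly stochastic d×d matrix. Then the inner product of x sorted in non-decreasing order with y sorted in non-decreasing order is at least the inner product x·(Ay), which in turn is at least the inner product of x sorted in non-decreasing order with y sorted in non-increasing order. -/
open Finset

/-- A real `d × d` matrix is doubly stochastic if all entries are non-negative
and all rows and columns sums to `1`. -/
def IsDoublyStochastic {d : ℕ} (A : Matrix (Fin d) (Fin d) ℝ) : Prop :=
  (∀ i j, 0 ≤ A i j) ∧ (∀ i, ∑ j, A i j = 1) ∧ (∀ j, ∑ i, A i j = 1)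

/-- `x` sorted into non-decreasing order. -/
noncomputable def sortAsc {d : ℕ} (x : Fin d → ℝ) : Fin d → ℝ := x ∘ Tuple.sort x

/-- `x` sorted into non-increasing order. -/
noncomputable def sortDesc {d : ℕ} (x : Fin d → ℝ) : Fin d → ℝ := fun i => sortAsc x i.rev

lemma sortAsc_mono {d : ℕ} (x : Fin d → ℝ) : Monotone (sortAsc x) :=
  Tuple.monotone_sort x

lemma sortDesc_anti {d : ℕ} (x : Fin d → ℝ) : Antitone (sortDesc x) :=
  fun i j hij => sortAsc_mono x (Fin.rev_le_rev.2 hij)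

lemma perm_le {d : ℕ} (x y : Fin d → ℝ) (σ : Equiv.Perm (Fin d)) :
    ∑ i, x i * y (σ i) ≤ ∑ i, sortAsc x i * sortAsc y i := by
  set τ := Tuple.sort x
  have h1 : ∑ i, x i * y (σ i) = ∑ i, x (τ i) * y (σ (τ i)) :=
    (Equiv.sum_comp τ (fun i => x i * y (σ i))).symm
  have h2 : ∀ i, y (σ (τ i)) = sortAsc y (((Tuple.sort y)⁻¹ * σ * τ : Equiv.Perm (Fin d)) i) := by
    intro i
    simp [sortAsc, Equiv.Perm.mul_apply]
  rw [h1]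
  calc ∑ i, x (τ i) * y (σ (τ i))
      = ∑ i, sortAsc x i * sortAsc y (((Tuple.sort y)⁻¹ * σ * τ : Equiv.Perm (Fin d)) i) := by
        refine Finset.sum_congr rfl fun i _ => ?_
        rw [h2]; rfl
    _ ≤ ∑ i, sortAsc x i * sortAsc y i :=
        ((sortAsc_mono x).monovary (sortAsc_mono y)).sum_mul_comp_perm_le_sum_mul

lemma le_perm {d : ℕ} (x y : Fin d → ℝ) (σ : Equiv.Perm (Fin d)) :
    ∑ i, sortAsc x i * sortDesc y i ≤ ∑ i, x i * y (σ i) := by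
  set τ := Tuple.sort x
  have h1 : ∑ i, x i * y (σ i) = ∑ i, x (τ i) * y (σ (τ i)) :=
    (Equiv.sum_comp τ (fun i => x i * y (σ i))).symm
  set ρ : Equiv.Perm (Fin d) := (Fin.revPerm * (Tuple.sort y)⁻¹ * σ * τ : Equiv.Perm (Fin d))
  have h2 : ∀ i, y (σ (τ i)) = sortDesc y (ρ i) := by
    intro i
    simp [sortDesc, sortAsc, ρ, Equiv.Perm.mul_apply, Fin.rev_rev]
  rw [h1]
  calc ∑ i, sortAsc x i * sortDesc y i
      ≤ ∑ i, sortAsc x i * sortDesc y (ρ i) :=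
        ((sortAsc_mono x).antivary (sortDesc_anti y)).sum_mul_le_sum_mul_comp_perm
    _ = ∑ i, x (τ i) * y (σ (τ i)) := by
        refine Finset.sum_congr rfl fun i _ => ?_
        rw [h2]; rfl

theorem stmt0 {d : ℕ} (x y : Fin d → ℝ) (A : Matrix (Fin d) (Fin d) ℝ)
    (hA : IsDoublyStochastic A) :
    (∑ i, x i * A.mulVec y i ≤ ∑ i, sortAsc x i * sortAsc y i) ∧
    (∑ i, sortAsc x i * sortDesc y i ≤ ∑ i, x i * A.mulVec y i) := by
  have hA' : A ∈ doublyStochastic ℝ (Fin d) := by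
    rw [mem_doublyStochastic_iff_sum]
    exact ⟨hA.1, hA.2.1, hA.2.2⟩
  obtain ⟨w, hw0, hw1, hwA⟩ := exists_eq_sum_perm_of_mem_doublyStochastic hA'
  have hP : ∀ (σ : Equiv.Perm (Fin d)) i, ∑ j, Equiv.Perm.permMatrix ℝ σ i j * y j = y (σ i) := by
    intro σ i
    have : ∀ j, Equiv.Perm.permMatrix ℝ σ i j * y j = if σ i = j then y j else 0 := by
      intro j
      simp only [Equiv.Perm.permMatrix, PEquiv.toMatrix_apply, Equiv.toPEquiv_apply,
        Option.mem_def, Option.some.injEq]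
      by_cases h : σ i = j <;> simp [h]
    rw [Finset.sum_congr rfl fun j _ => this j, Finset.sum_ite_eq Finset.univ (σ i) y]
    simp
  have hmv : ∀ i, A.mulVec y i = ∑ σ : Equiv.Perm (Fin d), w σ * y (σ i) := by
    intro i
    subst hwA
    simp only [Matrix.mulVec, dotProduct, Matrix.sum_apply, Matrix.smul_apply,
      smul_eq_mul, Finset.sum_mul]
    rw [Finset.sum_comm]
    refine Finset.sum_congr rfl fun σ _ => ?_
    rw [← hP σ i, Finset.mul_sum]
    exact Finset.sum_congr rfl fun j _ => by ring
  have hcomp : ∑ i, x i * A.mulVec y i = ∑ σ : Equiv.Perm (Fin d), w σ * ∑ i, x i * y (σ i) := by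
    simp only [hmv, Finset.mul_sum]
    rw [Finset.sum_comm]
    exact Finset.sum_congr rfl fun σ _ => Finset.sum_congr rfl fun i _ => by ring
  rw [hcomp]
  constructor
  · calc ∑ σ : Equiv.Perm (Fin d), w σ * ∑ i, x i * y (σ i)
        ≤ ∑ σ : Equiv.Perm (Fin d), w σ * ∑ i, sortAsc x i * sortAsc y i :=
          Finset.sum_le_sum fun σ _ => mul_le_mul_of_nonneg_left (perm_le x y σ) (hw0 σ)
      _ = ∑ i, sortAsc x i * sortAsc y i := by rw [← Finset.sum_mul, hw1, one_mul]
  · calc ∑ i, sortAsc x i * sortDesc y i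
        = ∑ σ : Equiv.Perm (Fin d), w σ * ∑ i, sortAsc x i * sortDesc y i := by
          rw [← Finset.sum_mul, hw1, one_mul]
      _ ≤ ∑ σ : Equiv.Perm (Fin d), w σ * ∑ i, x i * y (σ i) :=
          Finset.sum_le_sum fun σ _ => mul_le_mul_of_nonneg_left (le_perm x y σ) (hw0 σ)
end

section
/- Let H = diag(ε₁,…,ε_d) be a Hamiltonian with eigenvalues ε_i and let ρ be a density matrix commuting with H, so ρ = diag(p₁,…,p_d) in the energy eigenbasis. Then ρ is passive (i.e., tr(H U ρ U†) ≥ tr(Hρ) for all unitaries U) if and only if for all i, j: ε_i ≤ ε_j implies p_i ≥ p_j. -/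
open Finset Matrix

lemma trace_form {d : ℕ} (ε p : Fin d → ℝ) (A : Matrix (Fin d) (Fin d) ℂ) :
    (Matrix.trace (Matrix.diagonal (fun i => (ε i : ℂ)) *
      (A * Matrix.diagonal (fun i => (p i : ℂ)) * star A))).re
    = ∑ i, ∑ k, ε i * p k * Complex.normSq (A i k) := by
  have key : ∀ (a b : ℝ) (z : ℂ), ((a : ℂ) * (z * (b : ℂ) * (starRingEnd ℂ) z))
      = ((a * b * Complex.normSq z : ℝ) : ℂ) := by
    intro a b z
    push_cast
    linear_combination (a : ℂ) * (b : ℂ) * Complex.mul_conj z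
  have h : ∀ i : Fin d, (Matrix.diagonal (fun i => (ε i : ℂ)) *
      (A * Matrix.diagonal (fun i => (p i : ℂ)) * star A)).diag i
      = ((∑ k, ε i * p k * Complex.normSq (A i k) : ℝ) : ℂ) := by
    intro i
    rw [Matrix.diag_apply, Matrix.diagonal_mul, Matrix.mul_apply, Complex.ofReal_sum,
      Finset.mul_sum]
    refine Finset.sum_congr rfl fun k _ => ?_
    rw [Matrix.mul_diagonal, Matrix.star_apply, Complex.star_def, key]
  rw [Matrix.trace]
  simp only [h]
  rw [← Complex.ofReal_sum, Complex.ofReal_re]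

lemma trace_diag {d : ℕ} (ε p : Fin d → ℝ) :
    (Matrix.trace (Matrix.diagonal (fun i => (ε i : ℂ)) *
      Matrix.diagonal (fun i => (p i : ℂ)))).re = ∑ i, ε i * p i := by
  rw [Matrix.diagonal_mul_diagonal, Matrix.trace_diagonal]
  push_cast [Complex.re_sum]
  simp [Complex.mul_re]

/-- A diagonal state `ρ = diag p`, commuting with the non-degenerate Hamiltonian
`H = diag ε`, is passive if and only if the populations are anti-ordered with
respect to the energies. -/
theorem stmt1 {d : ℕ} (ε p : Fin d → ℝ) (hε : StrictMono ε)
    (hp0 : ∀ i, 0 ≤ p i) (hp1 : ∑ i, p i = 1) :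
    (∀ U : Matrix.unitaryGroup (Fin d) ℂ,
        (Matrix.trace (Matrix.diagonal (fun i => (ε i : ℂ)) *
          ((U : Matrix (Fin d) (Fin d) ℂ) * Matrix.diagonal (fun i => (p i : ℂ)) *
            star (U : Matrix (Fin d) (Fin d) ℂ)))).re ≥
        (Matrix.trace (Matrix.diagonal (fun i => (ε i : ℂ)) *
          Matrix.diagonal (fun i => (p i : ℂ)))).re) ↔
    (∀ i j, ε i ≤ ε j → p j ≤ p i) := by
  constructor
  · -- passivity → anti-ordered
    intro hpass a b hab
    rcases eq_or_ne a b with rfl | hne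
    · exact le_refl _
    have hlt : ε a < ε b := lt_of_le_of_ne hab (fun h => hne (hε.injective h))
    set σ := Equiv.swap a b with hσ
    set P : Matrix (Fin d) (Fin d) ℂ := Matrix.of (fun i j => if σ i = j then 1 else 0) with hP
    have hPU : P ∈ Matrix.unitaryGroup (Fin d) ℂ := by
      rw [Matrix.mem_unitaryGroup_iff]
      ext i j
      simp only [Matrix.mul_apply, Matrix.star_apply, hP, Matrix.of_apply, apply_ite star, star_one,
        star_zero]
      rw [Finset.sum_eq_single (σ i)]
      · simp [σ.injective.eq_iff, eq_comm, Matrix.one_apply]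
      · intro k _ hk; simp [hk.symm]
      · simp
    have := hpass ⟨P, hPU⟩
    rw [trace_form, trace_diag] at this
    have hB : ∀ i k : Fin d, Complex.normSq (P i k) = if σ i = k then 1 else 0 := by
      intro i k; by_cases h : σ i = k <;> simp [hP, h]
    have hsum : ∑ i, ∑ k, ε i * p k * Complex.normSq (P i k) = ∑ i, ε i * p (σ i) := by
      refine Finset.sum_congr rfl fun i _ => ?_
      simp only [hB, mul_ite, mul_one, mul_zero]
      simp
    rw [hsum] at this
    -- difference supported on {a, b}
    have hdiff : ∑ i, ε i * p (σ i) - ∑ i, ε i * p i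
        = ε a * p b + ε b * p a - (ε a * p a + ε b * p b) := by
      rw [← Finset.sum_sub_distrib]
      rw [show (Finset.univ : Finset (Fin d)) = (Finset.univ : Finset (Fin d)) from rfl]
      have : ∀ i ∈ (Finset.univ : Finset (Fin d)), i ∉ ({a, b} : Finset (Fin d)) →
          ε i * p (σ i) - ε i * p i = 0 := by
        intro i _ hi
        simp only [Finset.mem_insert, Finset.mem_singleton, not_or] at hi
        rw [hσ, Equiv.swap_apply_of_ne_of_ne hi.1 hi.2]
        ring
      rw [← Finset.sum_subset (Finset.subset_univ ({a, b} : Finset (Fin d))) this]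
      rw [Finset.sum_insert (by simpa using hne), Finset.sum_singleton]
      rw [hσ, Equiv.swap_apply_left, Equiv.swap_apply_right]
      ring
    nlinarith [this, hdiff]
  · -- anti-ordered → passivity
    intro h U
    rw [ge_iff_le, trace_form, trace_diag]
    set B : Matrix (Fin d) (Fin d) ℝ :=
      Matrix.of (fun i j => Complex.normSq ((U : Matrix (Fin d) (Fin d) ℂ) i j)) with hBdef
    have hrow : ∀ i, ∑ j, B i j = 1 := by
      intro i
      have h1 : ((U : Matrix (Fin d) (Fin d) ℂ) * star (U : Matrix (Fin d) (Fin d) ℂ)) i i = 1 :=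
        by rw [Matrix.mem_unitaryGroup_iff.mp U.2]; simp [Matrix.one_apply]
      rw [Matrix.mul_apply] at h1
      have : ∀ k, (U : Matrix (Fin d) (Fin d) ℂ) i k * (star (U : Matrix (Fin d) (Fin d) ℂ)) k i
          = ((B i k : ℝ) : ℂ) := by
        intro k
        rw [Matrix.star_apply, Complex.star_def, Complex.mul_conj]
        simp [hBdef]
      simp only [this] at h1
      rw [← Complex.ofReal_sum] at h1
      exact_mod_cast h1
    have hcol : ∀ j, ∑ i, B i j = 1 := by
      intro j
      have h1 : (star (U : Matrix (Fin d) (Fin d) ℂ) * (U : Matrix (Fin d) (Fin d) ℂ)) j j = 1 :=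
        by rw [Matrix.mem_unitaryGroup_iff'.mp U.2]; simp [Matrix.one_apply]
      rw [Matrix.mul_apply] at h1
      have : ∀ k, (star (U : Matrix (Fin d) (Fin d) ℂ)) j k * (U : Matrix (Fin d) (Fin d) ℂ) k j
          = ((B k j : ℝ) : ℂ) := by
        intro k
        rw [Matrix.star_apply, Complex.star_def, ← Complex.normSq_eq_conj_mul_self]
        simp [hBdef]
      simp only [this] at h1
      rw [← Complex.ofReal_sum] at h1
      exact_mod_cast h1
    have hBds : B ∈ doublyStochastic ℝ (Fin d) := by
      rw [mem_doublyStochastic_iff_sum]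
      exact ⟨fun i j => Complex.normSq_nonneg _, hrow, hcol⟩
    obtain ⟨w, hw0, hw1, hwB⟩ := exists_eq_sum_perm_of_mem_doublyStochastic hBds
    have hanti : Antivary ε p := by
      intro i j hij
      by_contra hc
      push_neg at hc
      exact absurd hij (not_lt.mpr (h i j hc.le))
    have hrearr : ∀ σ : Equiv.Perm (Fin d), ∑ i, ε i * p i ≤ ∑ i, ε i * p (σ i) :=
      fun σ => hanti.sum_mul_le_sum_mul_comp_perm
    calc ∑ i, ε i * p i = ∑ σ : Equiv.Perm (Fin d), w σ * ∑ i, ε i * p i := by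
          rw [← Finset.sum_mul, hw1, one_mul]
      _ ≤ ∑ σ : Equiv.Perm (Fin d), w σ * ∑ i, ε i * p (σ i) := by
          refine Finset.sum_le_sum fun σ _ => ?_
          exact mul_le_mul_of_nonneg_left (hrearr σ) (hw0 σ)
      _ = ∑ i, ∑ j, ε i * p j * B i j := by
          have hBapp : ∀ i j, B i j
              = ∑ σ : Equiv.Perm (Fin d), w σ * (if σ i = j then 1 else 0) := by
            intro i j
            rw [← hwB]
            simp [Matrix.sum_apply, Equiv.Perm.permMatrix, PEquiv.toMatrix_apply,
              Equiv.toPEquiv_apply, eq_comm]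
          have hinner : ∀ i, ∑ j, ε i * p j * B i j
              = ∑ σ : Equiv.Perm (Fin d), w σ * (ε i * p (σ i)) := by
            intro i
            simp only [hBapp, Finset.mul_sum]
            rw [Finset.sum_comm]
            refine Finset.sum_congr rfl fun σ _ => ?_
            rw [Finset.sum_eq_single (σ i)]
            · simp; ring
            · intro k _ hk; simp [Ne.symm hk]
            · simp
          simp only [hinner]
          rw [Finset.sum_comm]
          simp [Finset.mul_sum]
      _ = ∑ i, ∑ k, ε i * p k * Complex.normSq ((U : Matrix (Fin d) (Fin d) ℂ) i k) := by
          simp [hBdef]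
end

section
/- A full-rank state ρ commuting with a non-degenerate Hamiltonian H is completely passive (ρ^⊗k is passive under the k-fold sum Hamiltonian for every k ≥ 1) if and only if ρ is a Gibbs state: p_i = e^{−βε_i}/Z for some β ≥ 0, where Z = ∑_j e^{−βε_j}. -/
/-!
Testing passivity of the tensor powers only on multi-indices that take two values on each side
shows that `m * (ε a - ε c) ≤ n * (ε e - ε b)` forces the same inequality for `s = -log p`.
Since the ratios `n / m` approximate every positive real, all slopes `(s i - s i₀) / (ε i - ε i₀)`
measured from a ground level `i₀` coincide, so `s` is affine in `ε` with non-negative slope `β`,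
which is the Gibbs form. Conversely, for a Gibbs state
`∏ t, p (f t) = exp (-β ∑ t, ε (f t)) / Z ^ k` is antitone in the energy `∑ t, ε (f t)`.
-/

open Finset Filter Topology

section
variable {ι : Type*}

@[to_additive]
theorem Fin.prod_univ_append_const {M : Type*} [CommMonoid M] (m n : ℕ) (a b : ι) (f : ι → M) :
    ∏ t, f (Fin.append (fun _ : Fin m => a) (fun _ : Fin n => b) t) = f a ^ m * f b ^ n := by
  simp [Fin.prod_univ_add]

theorem mul_le_mul_of_forall_nat_mul_le {a b s t : ℝ} (ha : 0 < a) (hb : 0 ≤ b)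
    (H : ∀ m n : ℕ, n * b ≤ m * a → n * t ≤ m * s) : t * a ≤ s * b := by
  have hlim : Tendsto (fun x : ℝ => (⌈b / a * x⌉₊ : ℝ) / x * s) atTop (𝓝 (b / a * s)) :=
    (tendsto_nat_ceil_mul_div_atTop (div_nonneg hb ha.le)).mul_const s
  have hbound : ∀ n : ℕ, 0 < n → t ≤ (⌈b / a * n⌉₊ : ℝ) / n * s := by
    intro n hn
    have hn' : (0 : ℝ) < n := Nat.cast_pos.mpr hn
    have hceil : n * b ≤ ⌈b / a * n⌉₊ * a :=
      calc (n : ℝ) * b = b / a * n * a := by field_simp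
        _ ≤ ⌈b / a * n⌉₊ * a := by gcongr; exact Nat.le_ceil _
    rw [div_mul_eq_mul_div, le_div_iff₀ hn']
    linarith [H _ n hceil]
  have : t ≤ b / a * s :=
    ge_of_tendsto (hlim.comp tendsto_natCast_atTop_atTop)
      ((eventually_gt_atTop 0).mono hbound)
  rw [div_mul_eq_mul_div, le_div_iff₀ ha] at this
  linarith

def TwoLevelMono (x y : ι → ℝ) : Prop :=
  ∀ (m n : ℕ) (a b c e : ι), m * x a + n * x b ≤ m * x c + n * x e →
    m * y a + n * y b ≤ m * y c + n * y e

namespace TwoLevelMono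

variable {x y : ι → ℝ}

theorem le_of_le (h : TwoLevelMono x y) {i j : ι} (hij : x i ≤ x j) : y i ≤ y j := by
  simpa using h 1 0 i i j j (by simpa using hij)

theorem slope_eq (h : TwoLevelMono x y) {i₀ i j : ι} (hi : x i₀ < x i) (hj : x i₀ < x j) :
    (y i - y i₀) * (x j - x i₀) = (y j - y i₀) * (x i - x i₀) := by
  have key : ∀ {i j : ι}, x i₀ < x i → x i₀ < x j →
      (y i - y i₀) * (x j - x i₀) ≤ (y j - y i₀) * (x i - x i₀) := by
    intro i j hi hj
    refine mul_le_mul_of_forall_nat_mul_le (by linarith) (by linarith) fun m n hmn => ?_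
    linarith [h n m i i₀ i₀ j (by linarith)]
  exact le_antisymm (key hi hj) (key hj hi)

theorem exists_affine [Finite ι] (h : TwoLevelMono x y) :
    ∃ β c : ℝ, 0 ≤ β ∧ ∀ i, y i = β * x i + c := by
  cases isEmpty_or_nonempty ι
  · exact ⟨0, 0, le_rfl, isEmptyElim⟩
  obtain ⟨i₀, hmin⟩ := Finite.exists_min x
  have flat : ∀ {i}, x i = x i₀ → y i = y i₀ := fun hi =>
    le_antisymm (h.le_of_le hi.le) (h.le_of_le hi.ge)
  by_cases hx : ∃ i₁, x i₀ < x i₁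
  · obtain ⟨i₁, hi₁⟩ := hx
    have hA : 0 < x i₁ - x i₀ := by linarith
    refine ⟨(y i₁ - y i₀) / (x i₁ - x i₀), y i₀ - (y i₁ - y i₀) / (x i₁ - x i₀) * x i₀,
      div_nonneg (by linarith [h.le_of_le hi₁.le]) hA.le, fun i => ?_⟩
    rcases (hmin i).lt_or_eq with hi | hi
    · have := h.slope_eq hi hi₁
      field_simp
      linarith
    · rw [flat hi.symm, hi]
      ring
  · simp only [not_exists, not_lt] at hx
    exact ⟨0, y i₀, le_rfl, fun i => by rw [flat (le_antisymm (hx i) (hmin i))]; ring⟩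

end TwoLevelMono

theorem twoLevelMono_neg_log_of_passive {x p : ι → ℝ} (hp : ∀ i, 0 < p i)
    (P : ∀ k : ℕ, 1 ≤ k → ∀ f g : Fin k → ι,
      ∑ t, x (f t) ≤ ∑ t, x (g t) → ∏ t, p (g t) ≤ ∏ t, p (f t)) :
    TwoLevelMono x fun i => -Real.log (p i) := by
  intro m n a b c e hx
  rcases Nat.eq_zero_or_pos (m + n) with h0 | hk
  · simp [Nat.eq_zero_of_add_eq_zero_right h0, Nat.eq_zero_of_add_eq_zero_left h0]
  have hprod := P (m + n) hk (Fin.append (fun _ => a) fun _ => b)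
    (Fin.append (fun _ => c) fun _ => e) (by simpa [Fin.sum_univ_append_const] using hx)
  rw [Fin.prod_univ_append_const, Fin.prod_univ_append_const] at hprod
  have hlog := Real.log_le_log (mul_pos (pow_pos (hp c) m) (pow_pos (hp e) n)) hprod
  rw [Real.log_mul (pow_pos (hp c) m).ne' (pow_pos (hp e) n).ne',
    Real.log_mul (pow_pos (hp a) m).ne' (pow_pos (hp b) n).ne',
    Real.log_pow, Real.log_pow, Real.log_pow, Real.log_pow] at hlog
  linarith

theorem eq_div_sum_of_eq_const_mul [Fintype ι] {p w : ι → ℝ} (C : ℝ) (hp : ∀ i, p i = C * w i)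
    (hp1 : ∑ i, p i = 1) (i : ι) : p i = w i / ∑ j, w j := by
  have hCw : C * ∑ j, w j = 1 := by rw [mul_sum, ← hp1]; exact sum_congr rfl fun j _ => (hp j).symm
  rw [hp i, eq_div_iff (right_ne_zero_of_mul_eq_one hCw)]
  linear_combination w i * hCw

theorem prod_exp_neg_mul_div {κ : Type*} [Fintype κ] (β Z : ℝ) (ε : ι → ℝ) (f : κ → ι) :
    ∏ t, Real.exp (-β * ε (f t)) / Z = Real.exp (-β * ∑ t, ε (f t)) / Z ^ Fintype.card κ := by
  rw [prod_div_distrib, prod_const, card_univ, ← Real.exp_sum, mul_sum]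

end

theorem stmt9_general {d : ℕ} (ε p : Fin d → ℝ)
    (hp : ∀ i, 0 < p i) (hp1 : ∑ i, p i = 1) :
    (∀ k : ℕ, 1 ≤ k → ∀ f g : Fin k → Fin d,
        ∑ t, ε (f t) ≤ ∑ t, ε (g t) → ∏ t, p (g t) ≤ ∏ t, p (f t)) ↔
    (∃ β : ℝ, 0 ≤ β ∧ ∀ i, p i = Real.exp (-β * ε i) / ∑ j, Real.exp (-β * ε j)) := by
  constructor
  · intro passive
    obtain ⟨β, c, hβ, hlog⟩ := (twoLevelMono_neg_log_of_passive hp passive).exists_affine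
    refine ⟨β, hβ, eq_div_sum_of_eq_const_mul (Real.exp (-c)) (fun i => ?_) hp1⟩
    rw [← Real.exp_add, ← Real.exp_log (hp i)]
    congr 1
    linarith [hlog i]
  · rintro ⟨β, hβ, hgibbs⟩ k - f g hfg
    simp only [hgibbs, prod_exp_neg_mul_div]
    exact div_le_div_of_nonneg_right
      (Real.exp_le_exp.2 (mul_le_mul_of_nonpos_left hfg (neg_nonpos.2 hβ))) (by positivity)

/-- A full-rank diagonal state with populations `p`, commuting with the non-degenerate
Hamiltonian with eigenvalues `ε`, is completely passive (every `k`-fold tensor power is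
passive for the `k`-fold sum Hamiltonian, expressed via multi-indices) if and only if it
is a Gibbs state `p i = e^{−β ε i}/Z` for some `β ≥ 0`. -/
theorem stmt9 {d : ℕ} (ε p : Fin d → ℝ) (hε : StrictMono ε)
    (hp : ∀ i, 0 < p i) (hp1 : ∑ i, p i = 1) :
    (∀ k : ℕ, 1 ≤ k → ∀ f g : Fin k → Fin d,
        ∑ t, ε (f t) ≤ ∑ t, ε (g t) → ∏ t, p (g t) ≤ ∏ t, p (f t)) ↔
    (∃ β : ℝ, 0 ≤ β ∧ ∀ i, p i = Real.exp (-β * ε i) / ∑ j, Real.exp (-β * ε j)) :=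
  stmt9_general ε p hp hp1
end

section
/- For a 2-dimensional system (qubit) with non-degenerate Hamiltonian ε₁ < ε₂, every passive state is completely passive. Concretely: if p₁ ≥ p₂ > 0 with p₁ + p₂ = 1, then there exists β ≥ 0 with p_i = e^{−βε_i}/(e^{−βε₁} + e^{−βε₂}) for i = 1, 2. -/
/-!
The Gibbs state with inverse temperature `β` is the one whose population ratio is
`p₁ / p₂ = exp (β (ε₂ - ε₁))`, and for two levels the ratio together with normalisation
determines the state. Solving for `β` gives `β = log (p₁ / p₂) / (ε₂ - ε₁)`, which is
nonnegative exactly because `p₁ ≥ p₂`.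
-/

open Real

lemma eq_div_add_of_mul_eq_mul {K : Type*} [Field K] {p₁ p₂ w₁ w₂ : K}
    (hsum : p₁ + p₂ = 1) (hw : w₁ + w₂ ≠ 0) (h : p₁ * w₂ = p₂ * w₁) :
    p₁ = w₁ / (w₁ + w₂) ∧ p₂ = w₂ / (w₁ + w₂) := by
  rw [eq_div_iff hw, eq_div_iff hw]
  constructor
  · linear_combination h + w₁ * hsum
  · linear_combination -h + w₂ * hsum

lemma exists_nonneg_exp_mul_eq {d r : ℝ} (hd : 0 < d) (hr : 1 ≤ r) :
    ∃ β : ℝ, 0 ≤ β ∧ exp (β * d) = r :=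
  ⟨log r / d, div_nonneg (log_nonneg hr) hd.le, by
    rw [div_mul_cancel₀ _ hd.ne', exp_log (by linarith)]⟩

/-- Every passive qubit state is completely passive: if `p₁ ≥ p₂ > 0`, `p₁ + p₂ = 1`
and `ε₁ < ε₂`, then the state is Gibbsian for some `β ≥ 0`. -/
theorem stmt10 (ε₁ ε₂ p₁ p₂ : ℝ) (hε : ε₁ < ε₂)
    (hp : p₁ ≥ p₂) (hp2 : 0 < p₂) (hsum : p₁ + p₂ = 1) :
    ∃ β : ℝ, 0 ≤ β ∧
      p₁ = Real.exp (-β * ε₁) / (Real.exp (-β * ε₁) + Real.exp (-β * ε₂)) ∧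
      p₂ = Real.exp (-β * ε₂) / (Real.exp (-β * ε₁) + Real.exp (-β * ε₂)) := by
  obtain ⟨β, hβ, hβratio⟩ :=
    exists_nonneg_exp_mul_eq (sub_pos.mpr hε) ((one_le_div hp2).mpr hp)
  have hboltzmann : exp (-β * ε₁) = p₁ / p₂ * exp (-β * ε₂) := by
    rw [← hβratio, ← exp_add]
    ring_nf
  refine ⟨β, hβ, eq_div_add_of_mul_eq_mul hsum (by positivity) ?_⟩
  rw [hboltzmann]
  field_simp
end

section
/- Let ρ be a density matrix with eigenvalues p_i > 0 that is not the ground state projector, with non-degenerate Hamiltonian eigenvalues ε₁ < … < ε_d. Define the β-athermality a_β(ρ) = β(E(ρ) − E(γ_β)) + (S(γ_β) − S(ρ)), where E(γ_β) = ∑ ε_i e^{−βε_i}/Z_β, S(γ_β) = βE(γ_β) + log Z_β, Z_β = ∑ e^{−βε_i}. Then the infimum of a_β(ρ) over β ∈ [0,∞) is attained at the unique β_min with E(γ_{β_min}) = E(ρ), provided E(ρ) is in the range (ε₁, E(γ₀)], and equals S(γ_{β_min}) − S(ρ). -/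
/-!
Up to the constant `-S(ρ)`, `a_β(ρ) = β E(ρ) + log Z_β`, and `(log Z_β)' = -E(γ_β)`, so
`d a_β / dβ = E(ρ) - E(γ_β)`. In turn `E(γ_β)' = -Var_{γ_β}(ε) ≤ 0`, so `β ↦ a_β(ρ)` is convex and
minimal exactly where `E(γ_β) = E(ρ)`. The variance vanishes only for constant `ε`, which
`ε 0 < E(ρ)` rules out, so `E(γ_β)` is strictly decreasing and this `β` is unique; it exists by the
intermediate value theorem, since `E(γ_β)` tends to the ground energy as `β → ∞`.
-/

open Finset

/-- Partition function of the Gibbs distribution. -/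
noncomputable def Zfun {d : ℕ} (ε : Fin d → ℝ) (β : ℝ) : ℝ := ∑ i, Real.exp (-β * ε i)

/-- Mean energy of the Gibbs state at inverse temperature `β`. -/
noncomputable def Egibbs {d : ℕ} (ε : Fin d → ℝ) (β : ℝ) : ℝ :=
  (∑ i, ε i * Real.exp (-β * ε i)) / Zfun ε β

/-- Entropy of the Gibbs state at inverse temperature `β`. -/
noncomputable def Sgibbs {d : ℕ} (ε : Fin d → ℝ) (β : ℝ) : ℝ :=
  β * Egibbs ε β + Real.log (Zfun ε β)

/-- The β-athermality `a_β(ρ) = β(E(ρ) − E(γ_β)) + (S(γ_β) − S(ρ))`. -/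
noncomputable def bAthermality {d : ℕ} (ε p : Fin d → ℝ) (β : ℝ) : ℝ :=
  β * ((∑ i, p i * ε i) - Egibbs ε β) +
    (Sgibbs ε β - (-∑ i, p i * Real.log (p i)))

open Filter Topology

theorem isMinOn_univ_of_hasDerivAt_of_monotone {f f' : ℝ → ℝ} {x : ℝ}
    (hf : ∀ y, HasDerivAt f (f' y) y) (hf' : Monotone f') (hx : f' x = 0) :
    IsMinOn f Set.univ x := by
  have hderiv : deriv f = f' := funext fun y => (hf y).deriv
  have hconvex : ConvexOn ℝ Set.univ f :=
    Monotone.convexOn_univ_of_deriv (fun y => (hf y).differentiableAt) (hderiv ▸ hf')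
  refine hconvex.isMinOn_of_rightDeriv_eq_zero (by simp) ?_
  rw [(hf x).hasDerivWithinAt.derivWithin (uniqueDiffWithinAt_Ioi x), hx]

theorem hasDerivAt_sum_mul_exp_neg_mul {ι : Type*} [Fintype ι] (a ε : ι → ℝ) (β : ℝ) :
    HasDerivAt (fun β => ∑ i, a i * Real.exp (-β * ε i))
      (-∑ i, a i * ε i * Real.exp (-β * ε i)) β := by
  have h := HasDerivAt.fun_sum fun i (_ : i ∈ univ) =>
    (((hasDerivAt_neg β).mul_const (ε i)).exp).const_mul (a i)
  refine h.congr_deriv ?_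
  rw [← sum_neg_distrib]
  exact sum_congr rfl fun i _ => by ring

theorem tendsto_mul_exp_neg_mul_atTop {a : ℝ} (ha : 0 ≤ a) :
    Tendsto (fun β => a * Real.exp (-β * a)) atTop (𝓝 0) := by
  rcases ha.eq_or_lt with rfl | ha
  · simp
  · simpa using (Real.tendsto_exp_neg_atTop_nhds_zero.comp
      (tendsto_id.atTop_mul_const ha)).const_mul a

noncomputable def Vgibbs {d : ℕ} (ε : Fin d → ℝ) (β : ℝ) : ℝ :=
  (∑ i, (ε i - Egibbs ε β) ^ 2 * Real.exp (-β * ε i)) / Zfun ε β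

namespace Gibbs

variable {d : ℕ} [NeZero d] (ε : Fin d → ℝ)

theorem Zfun_pos (β : ℝ) : 0 < Zfun ε β :=
  sum_pos (fun _ _ => Real.exp_pos _) univ_nonempty

omit [NeZero d] in
theorem hasDerivAt_Zfun (β : ℝ) :
    HasDerivAt (Zfun ε) (-∑ i, ε i * Real.exp (-β * ε i)) β := by
  have h := hasDerivAt_sum_mul_exp_neg_mul 1 ε β
  simp only [Pi.one_apply, one_mul] at h
  exact h

theorem hasDerivAt_log_Zfun (β : ℝ) :
    HasDerivAt (fun β => Real.log (Zfun ε β)) (-Egibbs ε β) β := by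
  simpa [Egibbs, neg_div] using (hasDerivAt_Zfun ε β).log (Zfun_pos ε β).ne'

theorem hasDerivAt_Egibbs (β : ℝ) : HasDerivAt (Egibbs ε) (-Vgibbs ε β) β := by
  have hvar : ∑ i, (ε i - Egibbs ε β) ^ 2 * Real.exp (-β * ε i)
      = ∑ i, ε i * ε i * Real.exp (-β * ε i)
        - 2 * Egibbs ε β * ∑ i, ε i * Real.exp (-β * ε i) + Egibbs ε β ^ 2 * Zfun ε β := by
    simp only [Zfun, mul_sum, ← sum_sub_distrib, ← sum_add_distrib]
    exact sum_congr rfl fun i _ => by ring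
  refine ((hasDerivAt_sum_mul_exp_neg_mul ε ε β).div (hasDerivAt_Zfun ε β)
    (Zfun_pos ε β).ne').congr_deriv ?_
  rw [Vgibbs, hvar, Egibbs]
  have hZ := Zfun_pos ε β
  generalize ∑ i, ε i * ε i * Real.exp (-β * ε i) = B
  generalize ∑ i, ε i * Real.exp (-β * ε i) = A
  generalize Zfun ε β = Z at hZ ⊢
  field_simp
  ring

theorem Vgibbs_nonneg (β : ℝ) : 0 ≤ Vgibbs ε β :=
  div_nonneg (sum_nonneg fun _ _ => by positivity) (Zfun_pos ε β).le

theorem Vgibbs_pos {i j : Fin d} (hij : ε i ≠ ε j) (β : ℝ) : 0 < Vgibbs ε β := by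
  refine div_pos (sum_pos' (fun _ _ => by positivity) ?_) (Zfun_pos ε β)
  obtain ⟨k, hk⟩ : ∃ k, ε k ≠ Egibbs ε β := by
    by_contra! h
    exact hij ((h i).trans (h j).symm)
  exact ⟨k, mem_univ k, mul_pos (sq_pos_of_ne_zero (sub_ne_zero.mpr hk)) (Real.exp_pos _)⟩

theorem antitone_Egibbs : Antitone (Egibbs ε) :=
  antitone_of_deriv_nonpos (fun β => (hasDerivAt_Egibbs ε β).differentiableAt)
    fun β => (hasDerivAt_Egibbs ε β).deriv ▸ neg_nonpos.mpr (Vgibbs_nonneg ε β)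

theorem strictAnti_Egibbs {i j : Fin d} (hij : ε i ≠ ε j) : StrictAnti (Egibbs ε) :=
  strictAnti_of_deriv_neg fun β =>
    (hasDerivAt_Egibbs ε β).deriv ▸ neg_neg_of_pos (Vgibbs_pos ε hij β)

theorem Egibbs_sub (c β : ℝ) :
    Egibbs ε β - c = ∑ i, (ε i - c) * (Real.exp (-β * ε i) / Zfun ε β) := by
  have hZ := (Zfun_pos ε β).ne'
  simp only [Egibbs, sub_mul, sum_sub_distrib, ← mul_div_assoc, ← sum_div, ← mul_sum]
  rw [← Zfun, sub_div, mul_div_cancel_right₀ c hZ]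

theorem tendsto_Egibbs_atTop {i₀ : Fin d} (hmin : ∀ i, ε i₀ ≤ ε i) :
    Tendsto (Egibbs ε) atTop (𝓝 (ε i₀)) := by
  have hbound :
      Tendsto (fun β => ∑ i, (ε i - ε i₀) * Real.exp (-β * (ε i - ε i₀))) atTop (𝓝 0) := by
    simpa using tendsto_finsetSum univ fun i _ =>
      tendsto_mul_exp_neg_mul_atTop (sub_nonneg.mpr (hmin i))
  have hgap : Tendsto (fun β => Egibbs ε β - ε i₀) atTop (𝓝 0) := by
    refine squeeze_zero (fun β => ?_) (fun β => ?_) hbound <;> rw [Egibbs_sub]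
    · exact sum_nonneg fun i _ =>
        mul_nonneg (sub_nonneg.mpr (hmin i)) (div_pos (Real.exp_pos _) (Zfun_pos ε β)).le
    · refine sum_le_sum fun i _ => mul_le_mul_of_nonneg_left ?_ (sub_nonneg.mpr (hmin i))
      have hZ : Real.exp (-β * ε i₀) ≤ Zfun ε β :=
        single_le_sum (f := fun i => Real.exp (-β * ε i)) (fun _ _ => (Real.exp_pos _).le)
          (mem_univ i₀)
      calc Real.exp (-β * ε i) / Zfun ε β ≤ Real.exp (-β * ε i) / Real.exp (-β * ε i₀) := by
            gcongr
        _ = Real.exp (-β * (ε i - ε i₀)) := by rw [← Real.exp_sub]; ring_nf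
  simpa using hgap.add_const (ε i₀)

theorem exists_Egibbs_eq {c : ℝ} {j : Fin d} (hj : ε j < c) (hc : c ≤ Egibbs ε 0) :
    ∃ β, 0 ≤ β ∧ Egibbs ε β = c := by
  obtain ⟨i₀, -, hmin⟩ := exists_min_image univ ε univ_nonempty
  have hlim := tendsto_Egibbs_atTop ε fun i => hmin i (mem_univ i)
  have hlt : ∀ᶠ β in atTop, 0 ≤ β ∧ Egibbs ε β < c :=
    (eventually_ge_atTop 0).and (hlim.eventually_lt_const ((hmin j (mem_univ j)).trans_lt hj))
  obtain ⟨β₁, hβ₁, hEβ₁⟩ := hlt.exists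
  obtain ⟨β, hβ, hEβ⟩ := intermediate_value_Icc' hβ₁
    (fun β _ => (hasDerivAt_Egibbs ε β).continuousAt.continuousWithinAt) ⟨hEβ₁.le, hc⟩
  exact ⟨β, hβ.1, hEβ⟩

omit [NeZero d] in
theorem bAthermality_eq (p : Fin d → ℝ) (β : ℝ) :
    bAthermality ε p β =
      β * ∑ i, p i * ε i + Real.log (Zfun ε β) + ∑ i, p i * Real.log (p i) := by
  rw [bAthermality, Sgibbs]
  ring

theorem isMinOn_bAthermality (p : Fin d → ℝ) {β : ℝ} (hβ : Egibbs ε β = ∑ i, p i * ε i) :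
    IsMinOn (bAthermality ε p) Set.univ β := by
  refine isMinOn_univ_of_hasDerivAt_of_monotone (f' := fun β => ∑ i, p i * ε i - Egibbs ε β)
    (fun β => ?_) (fun _ _ h => sub_le_sub_left (antitone_Egibbs ε h) _)
    (sub_eq_zero.mpr hβ.symm)
  rw [funext (bAthermality_eq ε p)]
  simpa [sub_eq_add_neg] using ((hasDerivAt_mul_const _).add (hasDerivAt_log_Zfun ε β)).add_const
    (∑ i, p i * Real.log (p i))

end Gibbs

open Gibbs in
theorem stmt14_general {d : ℕ} [NeZero d] (ε p : Fin d → ℝ) (hp1 : ∑ i, p i = 1)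
    (hE1 : ε 0 < ∑ i, p i * ε i) (hE2 : ∑ i, p i * ε i ≤ Egibbs ε 0) :
    ∃ βmin : ℝ, 0 ≤ βmin ∧ Egibbs ε βmin = ∑ i, p i * ε i ∧
      (∀ β' : ℝ, 0 ≤ β' → Egibbs ε β' = ∑ i, p i * ε i → β' = βmin) ∧
      IsLeast (bAthermality ε p '' Set.Ici 0) (bAthermality ε p βmin) ∧
      bAthermality ε p βmin =
        Sgibbs ε βmin - (-∑ i, p i * Real.log (p i)) := by
  obtain ⟨j, hj⟩ : ∃ j, ε j ≠ ε 0 := by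
    by_contra! hconst
    have : ∑ i, p i * ε i = ε 0 := by simp [hconst, ← sum_mul, hp1]
    exact hE1.ne' this
  obtain ⟨βmin, hβmin, hEβmin⟩ := exists_Egibbs_eq ε hE1 hE2
  refine ⟨βmin, hβmin, hEβmin,
    fun β' _ hEβ' => (strictAnti_Egibbs ε hj).injective (hEβ'.trans hEβmin.symm),
    ⟨⟨βmin, hβmin, rfl⟩, ?_⟩, by simp [bAthermality, hEβmin]⟩
  rintro _ ⟨β, -, rfl⟩
  exact isMinOn_bAthermality ε p hEβmin (Set.mem_univ β)

/-- The infimum over `β ∈ [0,∞)` of the β-athermality of a state with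
`ε 0 < E(ρ) ≤ E(γ₀)` is attained at the unique `β_min ≥ 0` with
`E(γ_{β_min}) = E(ρ)`, and equals `S(γ_{β_min}) − S(ρ)`. -/
theorem stmt14 {d : ℕ} [NeZero d] (ε p : Fin d → ℝ) (hε : StrictMono ε)
    (hp : ∀ i, 0 < p i) (hp1 : ∑ i, p i = 1)
    (hE1 : ε 0 < ∑ i, p i * ε i) (hE2 : ∑ i, p i * ε i ≤ Egibbs ε 0) :
    ∃ βmin : ℝ, 0 ≤ βmin ∧ Egibbs ε βmin = ∑ i, p i * ε i ∧
      (∀ β' : ℝ, 0 ≤ β' → Egibbs ε β' = ∑ i, p i * ε i → β' = βmin) ∧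
      IsLeast (bAthermality ε p '' Set.Ici 0) (bAthermality ε p βmin) ∧
      bAthermality ε p βmin =
        Sgibbs ε βmin - (-∑ i, p i * Real.log (p i)) :=
  stmt14_general ε p hp1 hE1 hE2
end
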